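/- arXiv:0708.0128 — 5 statements merged into one kernel-verified Lean document; each statement's English description precedes it below -/
import Mathlib

section
/- Fix a > 0 and real numbers c, w. Then as t ↓ 0, the integral from 0 to a of (2y/√(2πt³))·exp(−(y+wt)²/(2t) − cy) dy equals 2/√(2πt) − (w + c) + o(1); that is, the difference between this integral and 2/√(2πt) converges to −(w+c) as t → 0⁺. -/
/-!
Write `k = w + c`. Completing the square, the integrand equals
`exp ((k² - w²) t / 2) · (2 / √(2πt)) · ((y + kt) / t - k) · exp (-(y + kt)² / (2t))`.
The first part has an explicit primitive: it gives `2 / √(2πt)` up to `o(1)`, the boundary term at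
`y = a` being of order `exp (-a² / (2t)) / √t`. After `y = √t u - kt` the second part is
`k · 2 / √(2π)` times the Gaussian integral of `exp (-u² / 2)` over `[k√t, a / √t + k√t]`, which
tends to the half-line mass `√(2π) / 2`; it contributes `-k`.
-/

open Real MeasureTheory Filter Topology Set

theorem tendsto_intervalIntegral_of_tendsto_nhds_of_tendsto_atTop {ι E : Type*}
    [NormedAddCommGroup E] [NormedSpace ℝ E] {l : Filter ι} [l.IsCountablyGenerated]
    {f : ℝ → E} (hf : Integrable f) {x₀ : ℝ} {p q : ι → ℝ}
    (hp : Tendsto p l (𝓝 x₀)) (hq : Tendsto q l atTop) :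
    Tendsto (fun i => ∫ x in p i..q i, f x) l (𝓝 (∫ x in Ioi x₀, f x)) := by
  have hprim : Tendsto (fun i => ∫ x in x₀..p i, f x) l (𝓝 0) := by
    simpa [Function.comp_def] using ((intervalIntegral.continuous_primitive
      (fun _ _ => hf.intervalIntegrable) x₀).tendsto x₀).comp hp
  simpa only [intervalIntegral.integral_interval_sub_left hf.intervalIntegrable
      hf.intervalIntegrable, sub_zero]
    using (intervalIntegral_tendsto_integral_Ioi x₀ hf.integrableOn hq).sub hprim

theorem integrable_exp_neg_sq_div_two : Integrable fun u : ℝ => exp (-u ^ 2 / 2) := by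
  simpa [neg_div, div_eq_inv_mul] using integrable_exp_neg_mul_sq (b := 1 / 2) (by norm_num)

theorem integral_Ioi_exp_neg_sq_div_two : ∫ u in Ioi 0, exp (-u ^ 2 / 2) = √(2 * π) / 2 := by
  simpa [neg_div, div_eq_inv_mul] using integral_gaussian_Ioi (1 / 2)

theorem tendsto_exp_neg_div_div_sqrt {b : ℝ} (hb : 0 < b) :
    Tendsto (fun t => exp (-b / t) / √t) (𝓝[>] 0) (𝓝 0) := by
  refine ((tendsto_rpow_mul_exp_neg_mul_atTop_nhds_zero (1 / 2) b hb).comp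
    tendsto_inv_nhdsGT_zero).congr' ?_
  filter_upwards [self_mem_nhdsWithin] with t (ht : 0 < t)
  rw [Function.comp_apply, inv_rpow ht.le, ← sqrt_eq_rpow]
  simp only [div_eq_mul_inv]
  ring

theorem tendsto_sqrt_nhdsGT_zero : Tendsto (√·) (𝓝[>] 0) (𝓝[>] 0) :=
  tendsto_nhdsWithin_iff.2
    ⟨by simpa using (continuous_sqrt.tendsto 0).mono_left nhdsWithin_le_nhds,
      eventually_nhdsWithin_of_forall fun _ ht => sqrt_pos.2 ht⟩

theorem HasDerivAt.tendsto_div_sqrt_nhdsGT_zero {f : ℝ → ℝ} {f' : ℝ} (hf : HasDerivAt f f' 0)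
    (hf0 : f 0 = 0) : Tendsto (fun t => f t / √t) (𝓝[>] 0) (𝓝 0) := by
  have hslope : Tendsto (slope f 0) (𝓝[>] 0) (𝓝 f') :=
    (hasDerivAt_iff_tendsto_slope.mp hf).mono_left (nhdsGT_le_nhdsNE 0)
  have hprod : Tendsto (fun t => √t * slope f 0 t) (𝓝[>] 0) (𝓝 0) := by
    simpa using (tendsto_nhds_of_tendsto_nhdsWithin tendsto_sqrt_nhdsGT_zero).mul hslope
  refine hprod.congr' ?_
  filter_upwards [self_mem_nhdsWithin] with t (ht : 0 < t)
  have hs : √t * √t = t := mul_self_sqrt ht.le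
  have hs0 : √t ≠ 0 := (sqrt_pos.2 ht).ne'
  rw [slope_def_field, hf0, sub_zero, sub_zero]
  field_simp
  linear_combination f t * hs

theorem integral_exp_neg_sq_div_two_comp_div_add (a m : ℝ) {s : ℝ} (hs : s ≠ 0) :
    ∫ y in (0 : ℝ)..a, exp (-((y + m) / s) ^ 2 / 2)
      = s * ∫ u in m / s..a / s + m / s, exp (-u ^ 2 / 2) := by
  simpa only [add_div, zero_div, zero_add, smul_eq_mul] using
    intervalIntegral.integral_comp_div_add (fun u => exp (-u ^ 2 / 2)) hs (m / s) (a := 0) (b := a)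

theorem integral_mul_exp_neg_sq_div_two_comp_div_add (a m s : ℝ) :
    ∫ y in (0 : ℝ)..a, (y + m) / s ^ 2 * exp (-((y + m) / s) ^ 2 / 2)
      = exp (-(m / s) ^ 2 / 2) - exp (-((a + m) / s) ^ 2 / 2) := by
  have hderiv : ∀ y, HasDerivAt (fun y => -exp (-((y + m) / s) ^ 2 / 2))
      ((y + m) / s ^ 2 * exp (-((y + m) / s) ^ 2 / 2)) y := fun y => by
    have hinner : HasDerivAt (fun y => -((y + m) / s) ^ 2 / 2) (-((y + m) / s ^ 2)) y :=
      ((((hasDerivAt_id' y).add_const m).div_const s).pow 2).neg.div_const 2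
        |>.congr_deriv (by simp only [Nat.cast_ofNat]; ring)
    exact hinner.exp.neg.congr_deriv (by ring)
  rw [intervalIntegral.integral_eq_sub_of_hasDerivAt (fun y _ => hderiv y)
    (Continuous.intervalIntegrable (by fun_prop) _ _), zero_add]
  ring

theorem integral_eq_closed_form (a c w : ℝ) {t : ℝ} (ht : 0 < t) :
    ∫ y in (0 : ℝ)..a, 2 * y / √(2 * π * t ^ 3) * exp (-(y + w * t) ^ 2 / (2 * t) - c * y)
      = 2 / √(2 * π) *
        ((exp (-(w ^ 2 / 2) * t) - exp (-(w ^ 2 / 2) * t - a * (w + c)) * exp (-(a ^ 2 / 2) / t))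
            / √t
          - (w + c) * exp (((w + c) ^ 2 - w ^ 2) / 2 * t) *
            ∫ u in (w + c) * √t..a / √t + (w + c) * √t, exp (-u ^ 2 / 2)) := by
  obtain ⟨s, hs, rfl⟩ : ∃ s, 0 < s ∧ t = s ^ 2 := ⟨√t, sqrt_pos.2 ht, (sq_sqrt ht.le).symm⟩
  set k := w + c
  set d := (k ^ 2 - w ^ 2) / 2 with hd
  have hsqrt : √(s ^ 2) = s := sqrt_sq hs.le
  have hsqrt3 : √(2 * π * (s ^ 2) ^ 3) = √(2 * π) * s ^ 3 := by
    rw [show 2 * π * (s ^ 2) ^ 3 = 2 * π * (s ^ 3) ^ 2 by ring, sqrt_mul (by positivity),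
      sqrt_sq (by positivity)]
  have h2π : √(2 * π) ≠ 0 := by positivity
  let g y := exp (-((y + k * s ^ 2) / s) ^ 2 / 2)
  have hpointwise : ∀ y,
      2 * y / √(2 * π * (s ^ 2) ^ 3) * exp (-(y + w * s ^ 2) ^ 2 / (2 * s ^ 2) - c * y)
        = 2 / √(2 * π) * exp (d * s ^ 2) / s * ((y + k * s ^ 2) / s ^ 2 * g y - k * g y) := by
    intro y
    have hexp : exp (-(y + w * s ^ 2) ^ 2 / (2 * s ^ 2) - c * y) = exp (d * s ^ 2) * g y := by
      rw [← exp_add]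
      congr 1
      field_simp
      ring
    rw [hsqrt3, hexp]
    field_simp
    ring
  have hg : Continuous g := by fun_prop
  rw [intervalIntegral.integral_congr (fun y _ => hpointwise y),
    intervalIntegral.integral_const_mul,
    intervalIntegral.integral_sub (Continuous.intervalIntegrable (by fun_prop) _ _)
      ((hg.const_mul k).intervalIntegrable _ _),
    intervalIntegral.integral_const_mul, integral_mul_exp_neg_sq_div_two_comp_div_add,
    integral_exp_neg_sq_div_two_comp_div_add _ _ hs.ne',
    show k * s ^ 2 / s = k * s by field_simp, hsqrt]
  have hlower : exp (d * s ^ 2) * exp (-(k * s) ^ 2 / 2) = exp (-(w ^ 2 / 2) * s ^ 2) := by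
    rw [← exp_add, hd]
    ring_nf
  have hupper : exp (d * s ^ 2) * exp (-((a + k * s ^ 2) / s) ^ 2 / 2)
      = exp (-(w ^ 2 / 2) * s ^ 2 - a * k) * exp (-(a ^ 2 / 2) / s ^ 2) := by
    rw [← exp_add, ← exp_add]
    congr 1
    field_simp
    ring
  rw [← hlower, ← hupper]
  field_simp

theorem stmt_1 (a c w : ℝ) (ha : 0 < a) :
    Tendsto (fun t : ℝ =>
        (∫ y in (0:ℝ)..a,
            (2 * y / Real.sqrt (2 * π * t ^ 3)) * Real.exp (-(y + w * t) ^ 2 / (2 * t) - c * y))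
          - 2 / Real.sqrt (2 * π * t))
      (nhdsWithin 0 (Set.Ioi 0)) (nhds (-(w + c))) := by
  have hsqrt : Tendsto (fun t => (w + c) * √t) (𝓝[>] 0) (𝓝 0) := by
    simpa using (tendsto_nhds_of_tendsto_nhdsWithin tendsto_sqrt_nhdsGT_zero).const_mul (w + c)
  have hupper : Tendsto (fun t => a / √t + (w + c) * √t) (𝓝[>] 0) atTop :=
    Tendsto.atTop_add (by simpa only [div_eq_mul_inv, Function.comp_def] using
      (tendsto_inv_nhdsGT_zero.comp tendsto_sqrt_nhdsGT_zero).const_mul_atTop ha) hsqrt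
  have hgauss := tendsto_intervalIntegral_of_tendsto_nhds_of_tendsto_atTop
    integrable_exp_neg_sq_div_two hsqrt hupper
  rw [integral_Ioi_exp_neg_sq_div_two] at hgauss
  have hbulk : Tendsto (fun t => (exp (-(w ^ 2 / 2) * t) - 1) / √t) (𝓝[>] 0) (𝓝 0) :=
    HasDerivAt.tendsto_div_sqrt_nhdsGT_zero
      (((hasDerivAt_id' 0).const_mul _).exp.sub_const 1) (by simp)
  have htail : Tendsto
      (fun t => exp (-(w ^ 2 / 2) * t - a * (w + c)) * (exp (-(a ^ 2 / 2) / t) / √t))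
      (𝓝[>] 0) (𝓝 0) := by
    have hcont : Continuous fun t => exp (-(w ^ 2 / 2) * t - a * (w + c)) := by fun_prop
    simpa using ((hcont.tendsto 0).mono_left nhdsWithin_le_nhds).mul
      (tendsto_exp_neg_div_div_sqrt (by positivity))
  have hdrift : Tendsto (fun t => exp (((w + c) ^ 2 - w ^ 2) / 2 * t)) (𝓝[>] 0) (𝓝 1) := by
    have hcont : Continuous fun t => exp (((w + c) ^ 2 - w ^ 2) / 2 * t) := by fun_prop
    simpa using (hcont.tendsto 0).mono_left nhdsWithin_le_nhds
  have hlim := ((hbulk.sub htail).sub ((hdrift.const_mul (w + c)).mul hgauss)).const_mul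
    (2 / √(2 * π))
  have h2π : √(2 * π) ≠ 0 := by positivity
  rw [show 2 / √(2 * π) * (0 - 0 - (w + c) * 1 * (√(2 * π) / 2)) = -(w + c) by
    field_simp; ring] at hlim
  refine hlim.congr' ?_
  filter_upwards [self_mem_nhdsWithin] with t (ht : 0 < t)
  rw [integral_eq_closed_form a c w ht, sqrt_mul (by positivity) t]
  have hsqrt_ne : √t ≠ 0 := (sqrt_pos.2 ht).ne'
  field_simp
  ring
end

section
/- Let µ, h > 0 with µh > 1. Then the equation y = µh·tanh(y) has a unique positive solution y*. Moreover, for real α with α̂ := α + µ²/2 > 0, the inequality 2α·cosh²(√(2α̂)h) + µ² > 0 holds if and only if α > −µ²/2 + y*²/(2h²). -/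
/-! With `φ y = y / tanh y`, a fixed point `y = c tanh y` is a solution of `φ y = c`. On `(0, ∞)`
`φ` is continuous and strictly increasing (its derivative has numerator `sinh y cosh y - y`), with
`φ y ≤ cosh y` and `y < φ y`, so `φ (arcosh c) ≤ c < φ c` and `φ = c` has exactly one positive
solution when `c > 1`.

For the inequality put `b = √(2α̂) h`. Since `2α = 2α̂ - μ²` and `cosh² - sinh² = 1`,
`2α cosh² b + μ² = cosh² b (2α̂ - μ² tanh² b)`, which is positive iff `μh tanh b < b`, i.e.
`φ y* = μh < φ b`, i.e. `y* < b`. -/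

open Real Set

namespace Real

theorem tanh_pos {x : ℝ} (hx : 0 < x) : 0 < tanh x := by
  rw [tanh_eq_sinh_div_cosh]
  exact div_pos (sinh_pos_iff.mpr hx) (cosh_pos x)

theorem div_tanh_eq (x : ℝ) : x / tanh x = x * cosh x / sinh x := by
  rw [tanh_eq_sinh_div_cosh, div_div_eq_mul_div]

theorem continuousOn_div_tanh : ContinuousOn (fun x => x / tanh x) (Ioi 0) := by
  simp only [div_tanh_eq]
  exact ContinuousOn.div (by fun_prop) (by fun_prop) fun x hx => (sinh_pos_iff.mpr hx).ne'

theorem self_lt_div_tanh {x : ℝ} (hx : 0 < x) : x < x / tanh x :=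
  lt_div_iff₀ (tanh_pos hx) |>.mpr <| mul_lt_of_lt_one_right hx (tanh_lt_one x)

theorem div_tanh_le_cosh {x : ℝ} (hx : 0 < x) : x / tanh x ≤ cosh x := by
  rw [div_tanh_eq, div_le_iff₀ (sinh_pos_iff.mpr hx), mul_comm]
  exact mul_le_mul_of_nonneg_left (self_le_sinh_iff.mpr hx.le) (cosh_pos x).le

theorem strictMonoOn_div_tanh : StrictMonoOn (fun x => x / tanh x) (Ioi 0) := by
  simp only [div_tanh_eq]
  refine strictMonoOn_of_deriv_pos (convex_Ioi 0)
    (continuousOn_div_tanh.congr fun x _ => (div_tanh_eq x).symm) fun x hx => ?_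
  rw [interior_Ioi, mem_Ioi] at hx
  have hs : 0 < sinh x := sinh_pos_iff.mpr hx
  have hd : HasDerivAt (fun x => x * cosh x / sinh x)
      (((1 * cosh x + x * sinh x) * sinh x - x * cosh x * cosh x) / sinh x ^ 2) x :=
    ((hasDerivAt_id x).mul (hasDerivAt_cosh x)).div (hasDerivAt_sinh x) hs.ne'
  rw [hd.deriv]
  have hnum : (1 * cosh x + x * sinh x) * sinh x - x * cosh x * cosh x = sinh x * cosh x - x := by
    linear_combination (-x) * cosh_sq x
  have h2x : 2 * x < 2 * sinh x * cosh x := by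
    rw [← sinh_two_mul]; exact self_lt_sinh_iff.mpr (by linarith)
  rw [hnum]
  exact div_pos (by linarith) (by positivity)

theorem exists_div_tanh_eq {c : ℝ} (hc : 1 < c) : ∃ x, 0 < x ∧ x / tanh x = c := by
  have ha : 0 < arcosh c := arcosh_pos hc
  have hb : 0 < c := by linarith
  have hmem : c ∈ Icc (arcosh c / tanh (arcosh c)) (c / tanh c) :=
    ⟨(div_tanh_le_cosh ha).trans_eq (cosh_arcosh hc.le), (self_lt_div_tanh hb).le⟩
  exact isPreconnected_Ioi.intermediate_value ha hb continuousOn_div_tanh hmem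

theorem eq_mul_tanh_iff {x c : ℝ} (hx : 0 < x) : x = c * tanh x ↔ x / tanh x = c := by
  rw [div_eq_iff (tanh_pos hx).ne']

theorem existsUnique_pos_eq_mul_tanh {c : ℝ} (hc : 1 < c) : ∃! x, 0 < x ∧ x = c * tanh x := by
  obtain ⟨x, hx, hxc⟩ := exists_div_tanh_eq hc
  refine ⟨x, ⟨hx, (eq_mul_tanh_iff hx).mpr hxc⟩, fun y ⟨hy, hyc⟩ => ?_⟩
  exact strictMonoOn_div_tanh.injOn hy hx (((eq_mul_tanh_iff hy).mp hyc).trans hxc.symm)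

theorem lt_iff_mul_tanh_lt_of_eq_mul_tanh {x y c : ℝ} (hy : 0 < y) (hyc : y = c * tanh y)
    (hx : 0 < x) : y < x ↔ c * tanh x < x := by
  rw [← strictMonoOn_div_tanh.lt_iff_lt hy hx, (eq_mul_tanh_iff hy).mp hyc,
    lt_div_iff₀ (tanh_pos hx)]

theorem sub_mul_cosh_sq_add_pos_iff {a b x : ℝ} (ha : 0 ≤ a) (hb : 0 ≤ b) (hx : 0 ≤ x) :
    0 < (b ^ 2 - a ^ 2) * cosh x ^ 2 + a ^ 2 ↔ a * tanh x < b := by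
  have hc : 0 < cosh x := cosh_pos x
  have key : (b ^ 2 - a ^ 2) * cosh x ^ 2 + a ^ 2 = cosh x ^ 2 * (b ^ 2 - (a * tanh x) ^ 2) := by
    rw [tanh_eq_sinh_div_cosh]
    field_simp
    linear_combination (-a ^ 2) * cosh_sq x
  have hat : 0 ≤ a * tanh x := mul_nonneg ha (by
    rw [tanh_eq_sinh_div_cosh]; exact div_nonneg (sinh_nonneg_iff.mpr hx) hc.le)
  rw [key, mul_pos_iff_of_pos_left (by positivity), sub_pos,
    pow_lt_pow_iff_left₀ hat hb two_ne_zero]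

end Real

theorem stmt_5 (μ h : ℝ) (hμ : 0 < μ) (hh : 0 < h) (hμh : 1 < μ * h) :
    (∃! y : ℝ, 0 < y ∧ y = μ * h * Real.tanh y) ∧
    ∀ ystar : ℝ, (0 < ystar ∧ ystar = μ * h * Real.tanh ystar) →
      ∀ α : ℝ, α + μ ^ 2 / 2 > 0 →
        (2 * α * Real.cosh (Real.sqrt (2 * (α + μ ^ 2 / 2)) * h) ^ 2 + μ ^ 2 > 0 ↔
          α > -μ ^ 2 / 2 + ystar ^ 2 / (2 * h ^ 2)) := by
  refine ⟨existsUnique_pos_eq_mul_tanh hμh, fun y ⟨hy, hyμh⟩ α hα => ?_⟩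
  set s := √(2 * (α + μ ^ 2 / 2))
  have hs : 0 < s := sqrt_pos.mpr (by linarith)
  have hs2 : s ^ 2 - μ ^ 2 = 2 * α := by rw [sq_sqrt (by linarith)]; ring
  have hsh : 0 < s * h := mul_pos hs hh
  calc 2 * α * cosh (s * h) ^ 2 + μ ^ 2 > 0
      ↔ μ * tanh (s * h) < s := by
        rw [gt_iff_lt, ← hs2, sub_mul_cosh_sq_add_pos_iff hμ.le hs.le hsh.le]
    _ ↔ μ * h * tanh (s * h) < s * h := by
        rw [mul_right_comm, mul_lt_mul_iff_of_pos_right hh]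
    _ ↔ y < s * h := (lt_iff_mul_tanh_lt_of_eq_mul_tanh hy hyμh hsh).symm
    _ ↔ y ^ 2 < (s * h) ^ 2 := (pow_lt_pow_iff_left₀ hy.le hsh.le two_ne_zero).symm
    _ ↔ α > -μ ^ 2 / 2 + y ^ 2 / (2 * h ^ 2) := by
        rw [mul_pow, sq_sqrt (by linarith), gt_iff_lt, ← lt_sub_iff_add_lt',
          div_lt_iff₀ (by positivity)]
        constructor <;> intro <;> linarith
end

section
/- Let µ, h > 0 with µh ≤ 1. Then for every real α with α̂ := α + µ²/2 > 0, one has 2α·cosh²(√(2α̂)h) + µ² > 0. -/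
open Real

lemma sinh_lt_mul_cosh (y : ℝ) (hy : 0 < y) : Real.sinh y < y * Real.cosh y := by
  have h : StrictMonoOn (fun t : ℝ => t * Real.cosh t - Real.sinh t) (Set.Ici 0) := by
    apply strictMonoOn_of_deriv_pos (convex_Ici 0)
    · fun_prop
    · intro t ht
      simp only [interior_Ici, Set.mem_Ioi] at ht
      have hd : deriv (fun t : ℝ => t * Real.cosh t - Real.sinh t) t
          = t * Real.sinh t := by
        have h1 : HasDerivAt (fun t : ℝ => t * Real.cosh t - Real.sinh t)
            (1 * Real.cosh t + t * Real.sinh t - Real.cosh t) t := by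
          exact ((hasDerivAt_id t).mul (Real.hasDerivAt_cosh t)).sub (Real.hasDerivAt_sinh t)
        rw [h1.deriv]; ring
      rw [hd]
      exact mul_pos ht (Real.sinh_pos_iff.2 ht)
  have := h (Set.self_mem_Ici) (Set.mem_Ici.2 hy.le) hy
  simpa using this

theorem stmt_6 (μ h : ℝ) (hμ : 0 < μ) (hh : 0 < h) (hμh : μ * h ≤ 1) :
    ∀ α : ℝ, α + μ ^ 2 / 2 > 0 →
      2 * α * Real.cosh (Real.sqrt (2 * (α + μ ^ 2 / 2)) * h) ^ 2 + μ ^ 2 > 0 := by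
  intro α hα
  set s : ℝ := 2 * (α + μ ^ 2 / 2) with hs_def
  have hs : 0 < s := by positivity
  set y : ℝ := Real.sqrt s * h with hy_def
  have hy : 0 < y := mul_pos (Real.sqrt_pos.2 hs) hh
  have hsq : Real.sqrt s ^ 2 = s := Real.sq_sqrt hs.le
  have h1 : Real.sinh y < y * Real.cosh y := sinh_lt_mul_cosh y hy
  have hsinh : 0 < Real.sinh y := Real.sinh_pos_iff.2 hy
  have hcosh : 0 < Real.cosh y := Real.cosh_pos y
  -- μ * h * sinh y < sqrt s * h * cosh y
  have h2 : μ * h * Real.sinh y < Real.sqrt s * h * Real.cosh y := by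
    calc μ * h * Real.sinh y ≤ Real.sinh y := by nlinarith
    _ < y * Real.cosh y := h1
    _ = Real.sqrt s * h * Real.cosh y := by rw [hy_def]
  have h3 : μ * Real.sinh y < Real.sqrt s * Real.cosh y := by
    nlinarith
  have h4 : μ * Real.sinh y * (μ * Real.sinh y) < Real.sqrt s * Real.cosh y * (Real.sqrt s * Real.cosh y) :=
    mul_self_lt_mul_self (le_of_lt (mul_pos hμ hsinh)) h3
  have hc : Real.cosh y ^ 2 = Real.sinh y ^ 2 + 1 := Real.cosh_sq y
  nlinarith
end

section
/- Let µ ≠ 0 and h > 0. Define p₊ = (µh − sinh(µh)e^{−µh})/(2sinh²(µh)) and p₋ = (−µh + sinh(µh)e^{µh})/(2sinh²(µh)). Then p₊ ∈ (0,1), p₋ ∈ (0,1), and p₊ + p₋ = 1. -/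
/-!
With `x = μ h`, the numerators `x - sinh x e^{-x} = (e^{-2x} - (1 - 2x)) / 2` and
`sinh x e^{x} - x = (e^{2x} - (1 + 2x)) / 2` are positive by the strict convexity bound
`1 + t < e^t` (`t ≠ 0`), and they add up to `sinh x (e^x - e^{-x}) = 2 sinh² x`, the common
denominator. Two positive numbers divided by their sum lie in `(0, 1)` and sum to `1`.
-/

open Real

lemma div_add_mem_Ioo_and_add_div_add_eq_one {K : Type*} [Field K] [LinearOrder K]
    [IsStrictOrderedRing K] {a b : K} (ha : 0 < a) (hb : 0 < b) :
    a / (a + b) ∈ Set.Ioo 0 1 ∧ b / (a + b) ∈ Set.Ioo 0 1 ∧ a / (a + b) + b / (a + b) = 1 := by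
  have hab : 0 < a + b := add_pos ha hb
  refine ⟨⟨div_pos ha hab, ?_⟩, ⟨div_pos hb hab, ?_⟩, ?_⟩
  · exact (div_lt_one hab).2 (lt_add_of_pos_right a hb)
  · exact (div_lt_one hab).2 (lt_add_of_pos_left b ha)
  · rw [← add_div, div_self hab.ne']

namespace Real

lemma sinh_mul_exp_neg (x : ℝ) : sinh x * exp (-x) = (1 - exp (-(2 * x))) / 2 := by
  rw [sinh_eq, show -(2 * x) = -x + -x by ring, exp_add, exp_neg]
  field_simp

lemma sinh_mul_exp (x : ℝ) : sinh x * exp x = (exp (2 * x) - 1) / 2 := by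
  rw [sinh_eq, two_mul, exp_add, exp_neg]
  field_simp

lemma sub_sinh_mul_exp_neg_pos {x : ℝ} (hx : x ≠ 0) : 0 < x - sinh x * exp (-x) := by
  have := add_one_lt_exp (neg_ne_zero.2 (mul_ne_zero two_ne_zero hx))
  rw [sinh_mul_exp_neg]
  linarith

lemma neg_add_sinh_mul_exp_pos {x : ℝ} (hx : x ≠ 0) : 0 < -x + sinh x * exp x := by
  have := add_one_lt_exp (mul_ne_zero two_ne_zero hx)
  rw [sinh_mul_exp]
  linarith

lemma sub_sinh_mul_exp_neg_add_neg_add_sinh_mul_exp (x : ℝ) :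
    x - sinh x * exp (-x) + (-x + sinh x * exp x) = 2 * sinh x ^ 2 := by
  rw [sinh_eq]
  ring

end Real

theorem stmt_18 (μ h : ℝ) (hμ : μ ≠ 0) (hh : 0 < h) :
    (μ * h - Real.sinh (μ * h) * Real.exp (-(μ * h))) / (2 * Real.sinh (μ * h) ^ 2)
        ∈ Set.Ioo (0 : ℝ) 1 ∧
    (-(μ * h) + Real.sinh (μ * h) * Real.exp (μ * h)) / (2 * Real.sinh (μ * h) ^ 2)
        ∈ Set.Ioo (0 : ℝ) 1 ∧
    (μ * h - Real.sinh (μ * h) * Real.exp (-(μ * h))) / (2 * Real.sinh (μ * h) ^ 2)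
        + (-(μ * h) + Real.sinh (μ * h) * Real.exp (μ * h)) / (2 * Real.sinh (μ * h) ^ 2)
      = 1 := by
  have hx : μ * h ≠ 0 := mul_ne_zero hμ hh.ne'
  rw [← sub_sinh_mul_exp_neg_add_neg_add_sinh_mul_exp]
  exact div_add_mem_Ioo_and_add_div_add_eq_one (sub_sinh_mul_exp_neg_pos hx)
    (neg_add_sinh_mul_exp_pos hx)
end

section
/- Fix µ ≠ 0 and x > 0, and for t > 0, 0 < x, y let q_t(x,y) = (sinh(µy)/sinh(µx))·(e^{−µ²t/2}/√(2πt))·(exp(−(y−x)²/(2t)) − exp(−(y+x)²/(2t))). Then q_t satisfies the Fokker–Planck equation ∂q_t/∂t = −∂/∂y( µ·coth(µy)·q_t ) + (1/2)·∂²q_t/∂y² for all t > 0 and x, y > 0. -/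
/-!
Write `h = sinh(μ ·)`, `g_t(w) = e^{-w²/2t}/√(2πt)` for the heat kernel and
`k_t(y) = g_t(y - x) - g_t(y + x)` for the Dirichlet heat kernel of the half-line (method of
images). Then `q_t(x, y) = h(y) e^{-μ²t/2} k_t(y) / h(x)`, a Doob transform of `k`. For
`u = h e^{-μ²t/2} k`, expanding `∂ᵧ(h'/h · u)` and `½ ∂ᵧ²u` with `h'' = μ² h` makes every term
containing `h'` cancel, leaving `h e^{-μ²t/2} (½ ∂ᵧ²k - ½ μ² k)`, which equals `∂ₜu` because
`k` solves `∂ₜk = ½ ∂ᵧ²k`.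
-/

open Real

/-- The transition density of Brownian motion with drift `-μ` Doob-conditioned to hit
`+∞` before `0`. -/
noncomputable def qdens (μ x : ℝ) (t y : ℝ) : ℝ :=
  (Real.sinh (μ * y) / Real.sinh (μ * x)) *
    (Real.exp (-(μ ^ 2) * t / 2) / Real.sqrt (2 * π * t)) *
    (Real.exp (-(y - x) ^ 2 / (2 * t)) - Real.exp (-(y + x) ^ 2 / (2 * t)))

open Filter Topology

def SolvesHeatEqAt (k : ℝ → ℝ → ℝ) (t y : ℝ) : Prop :=
  ∃ k' : ℝ → ℝ, ∃ k'' : ℝ,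
    (∀ z, HasDerivAt (k t) (k' z) z) ∧ HasDerivAt k' k'' y ∧
      HasDerivAt (fun s => k s y) (k'' / 2) t

namespace SolvesHeatEqAt

variable {k l : ℝ → ℝ → ℝ} {t y : ℝ}

theorem sub (hk : SolvesHeatEqAt k t y) (hl : SolvesHeatEqAt l t y) :
    SolvesHeatEqAt (fun s z => k s z - l s z) t y := by
  obtain ⟨k', k'', hk', hk'', hkt⟩ := hk
  obtain ⟨l', l'', hl', hl'', hlt⟩ := hl
  refine ⟨fun z => k' z - l' z, k'' - l'', fun z => (hk' z).sub (hl' z), hk''.sub hl'', ?_⟩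
  exact (hkt.sub hlt).congr_deriv (sub_div _ _ _).symm

theorem div_const (hk : SolvesHeatEqAt k t y) (a : ℝ) :
    SolvesHeatEqAt (fun s z => k s z / a) t y := by
  obtain ⟨k', k'', hk', hk'', hkt⟩ := hk
  refine ⟨fun z => k' z / a, k'' / a, fun z => (hk' z).div_const a, hk''.div_const a, ?_⟩
  exact (hkt.div_const a).congr_deriv (div_right_comm _ _ _)

theorem comp_add_const {a : ℝ} (hk : SolvesHeatEqAt k t (y + a)) :
    SolvesHeatEqAt (fun s z => k s (z + a)) t y := by
  obtain ⟨k', k'', hk', hk'', hkt⟩ := hk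
  exact ⟨fun z => k' (z + a), k'', fun z => (hk' (z + a)).comp_add_const z a,
    hk''.comp_add_const y a, hkt⟩

theorem comp_sub_const {a : ℝ} (hk : SolvesHeatEqAt k t (y - a)) :
    SolvesHeatEqAt (fun s z => k s (z - a)) t y := by
  obtain ⟨k', k'', hk', hk'', hkt⟩ := hk
  exact ⟨fun z => k' (z - a), k'', fun z => (hk' (z - a)).comp_sub_const z a,
    hk''.comp_sub_const y a, hkt⟩

end SolvesHeatEqAt

noncomputable def heatKernel (t w : ℝ) : ℝ :=
  exp (-w ^ 2 / (2 * t)) / sqrt (2 * π * t)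

theorem hasDerivAt_heatKernel_space (t w : ℝ) :
    HasDerivAt (heatKernel t) (-(w / t) * heatKernel t w) w := by
  have hexponent : HasDerivAt (fun v => -v ^ 2 / (2 * t)) (-(w / t)) w :=
    ((hasDerivAt_pow 2 w).neg.div_const (2 * t)).congr_deriv (by push_cast; ring)
  exact (hexponent.exp.div_const (sqrt (2 * π * t))).congr_deriv (by rw [heatKernel]; ring)

theorem hasDerivAt_heatKernel_space_deriv (t w : ℝ) :
    HasDerivAt (fun v => -(v / t) * heatKernel t v)
      ((w ^ 2 / t ^ 2 - 1 / t) * heatKernel t w) w :=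
  (((hasDerivAt_id w).div_const t).neg.mul (hasDerivAt_heatKernel_space t w)).congr_deriv
    (by simp only [Pi.neg_apply, id]; ring)

theorem hasDerivAt_heatKernel_time {t : ℝ} (ht : 0 < t) (w : ℝ) :
    HasDerivAt (fun s => heatKernel s w) ((w ^ 2 / t ^ 2 - 1 / t) * heatKernel t w / 2) t := by
  have h2πt : 0 < 2 * π * t := by positivity
  have hexponent : HasDerivAt (fun s => -w ^ 2 / (2 * s)) (w ^ 2 / (2 * t ^ 2)) t := by
    refine (((hasDerivAt_inv ht.ne').const_mul (-w ^ 2 / 2)).congr_deriv (by ring))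
      |>.congr_of_eventuallyEq (Eventually.of_forall fun s => ?_)
    ring
  have hsqrt : HasDerivAt (fun s => sqrt (2 * π * s)) (π / sqrt (2 * π * t)) t :=
    (((hasDerivAt_id t).const_mul (2 * π)).sqrt h2πt.ne').congr_deriv (by simp only [id]; ring)
  refine (hexponent.exp.div hsqrt (sqrt_pos.mpr h2πt).ne').congr_deriv ?_
  have hS2 := sq_sqrt h2πt.le
  have hS := (sqrt_pos.mpr h2πt).ne'
  rw [heatKernel]
  generalize sqrt (2 * π * t) = S at hS2 hS ⊢
  field_simp
  linear_combination t * hS2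

theorem solvesHeatEqAt_heatKernel {t : ℝ} (ht : 0 < t) (w : ℝ) :
    SolvesHeatEqAt heatKernel t w :=
  ⟨fun v => -(v / t) * heatKernel t v, _, hasDerivAt_heatKernel_space t,
    hasDerivAt_heatKernel_space_deriv t w, hasDerivAt_heatKernel_time ht w⟩

noncomputable def dirichletHeatKernel (x t y : ℝ) : ℝ :=
  heatKernel t (y - x) - heatKernel t (y + x)

theorem solvesHeatEqAt_dirichletHeatKernel (x : ℝ) {t : ℝ} (ht : 0 < t) (y : ℝ) :
    SolvesHeatEqAt (dirichletHeatKernel x) t y :=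
  (solvesHeatEqAt_heatKernel ht _).comp_sub_const.sub
    (solvesHeatEqAt_heatKernel ht _).comp_add_const

theorem SolvesHeatEqAt.doobTransform {k : ℝ → ℝ → ℝ} {h h' : ℝ → ℝ} {c t y : ℝ}
    (hk : SolvesHeatEqAt k t y) (hh : ∀ z, HasDerivAt h (h' z) z)
    (hh' : HasDerivAt h' (c * h y) y)
    (hy : ∀ᶠ z in 𝓝 y, h z ≠ 0) :
    deriv (fun s => h y * exp (-c * s / 2) * k s y) t
      = -deriv (fun z => h' z / h z * (h z * exp (-c * t / 2) * k t z)) y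
        + 1 / 2 * deriv (deriv fun z => h z * exp (-c * t / 2) * k t z) y := by
  obtain ⟨k', k'', hk', hk'', hkt⟩ := hk
  set E := exp (-c * t / 2)
  have hE : HasDerivAt (fun s => exp (-c * s / 2)) (E * (-c / 2)) t :=
    (((hasDerivAt_id t).const_mul (-c)).div_const 2).exp.congr_deriv (by simp only [E, id]; ring)
  have htime : HasDerivAt (fun s => h y * exp (-c * s / 2) * k s y)
      (h y * (E * (-c / 2)) * k t y + h y * E * (k'' / 2)) t :=
    (hE.const_mul (h y)).mul hkt
  have hdrift_eq : (fun z => h' z / h z * (h z * E * k t z)) =ᶠ[𝓝 y]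
      fun z => h' z * E * k t z := by
    filter_upwards [hy] with z hz
    field_simp
  have hdrift : HasDerivAt (fun z => h' z * E * k t z)
      (c * h y * E * k t y + h' y * E * k' y) y :=
    (hh'.mul_const E).mul (hk' y)
  have hspace : deriv (fun z => h z * E * k t z) = fun z => h' z * E * k t z + h z * E * k' z :=
    funext fun z => (((hh z).mul_const E).mul (hk' z)).deriv
  have hspace' : HasDerivAt (fun z => h' z * E * k t z + h z * E * k' z)
      (c * h y * E * k t y + h' y * E * k' y + (h' y * E * k' y + h y * E * k'')) y :=
    hdrift.add (((hh y).mul_const E).mul hk'')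
  rw [htime.deriv, hdrift_eq.deriv_eq, hdrift.deriv, hspace, hspace'.deriv]
  ring

theorem qdens_eq_doobTransform (μ x : ℝ) :
    qdens μ x = fun s z => sinh (μ * z) * exp (-(μ ^ 2) * s / 2) *
      (dirichletHeatKernel x s z / sinh (μ * x)) := by
  funext s z
  simp only [qdens, dirichletHeatKernel, heatKernel]
  ring

theorem stmt_19_general (μ x : ℝ) (hμ : μ ≠ 0) :
    ∀ t y : ℝ, 0 < t → 0 < y →
      deriv (fun s => qdens μ x s y) t
        = -(deriv (fun z => μ * (Real.cosh (μ * z) / Real.sinh (μ * z)) * qdens μ x t z) y)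
          + (1 / 2) * deriv (deriv (fun z => qdens μ x t z)) y := by
  intro t y ht hy
  have hsinh (z : ℝ) : HasDerivAt (fun v => sinh (μ * v)) (μ * cosh (μ * z)) z :=
    ((hasDerivAt_id z).const_mul μ).sinh.congr_deriv (by simp only [id]; ring)
  have hcosh : HasDerivAt (fun v => μ * cosh (μ * v)) (μ ^ 2 * sinh (μ * y)) y :=
    (((hasDerivAt_id y).const_mul μ).cosh.const_mul μ).congr_deriv (by simp only [id]; ring)
  have hsinh_ne : ∀ᶠ z in 𝓝 y, sinh (μ * z) ≠ 0 := by
    filter_upwards [Ioi_mem_nhds hy] with z hz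
    exact sinh_ne_zero.mpr (mul_ne_zero hμ (ne_of_gt hz))
  simp only [qdens_eq_doobTransform, ← mul_div_assoc μ]
  exact ((solvesHeatEqAt_dirichletHeatKernel x ht y).div_const _).doobTransform
    hsinh hcosh hsinh_ne

theorem stmt_19 (μ x : ℝ) (hμ : μ ≠ 0) (hx : 0 < x) :
    ∀ t y : ℝ, 0 < t → 0 < y →
      deriv (fun s => qdens μ x s y) t
        = -(deriv (fun z => μ * (Real.cosh (μ * z) / Real.sinh (μ * z)) * qdens μ x t z) y)
          + (1 / 2) * deriv (deriv (fun z => qdens μ x t z)) y :=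
  stmt_19_general μ x hμ
end
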